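/- Let M be a topological space, E a finite-dimensional real normed vector space, and ψ : M → E a continuous map admitting a local cone structure C. Then ψ is convex if and only if the following three conditions hold: (1) the range of ψ is a convex set; (2) every fiber of ψ is preconnected; and (3) the corestriction ψ : M → range ψ is an open map (where range ψ carries the subspace topology). -/

import Mathlib

/-! Condition (S1) says that `ψ` maps `𝓝 x` onto `𝓝[C x] (ψ x)`; once fibers are connected, (S2)
makes this filter depend only on `ψ x`, so `ψ`-saturations of open sets are open. For a convex `ψ`,
the range is convex because a connected set in a segment containing both endpoints is the whole
segment, and `ψ⁻¹{u} = ψ⁻¹[u, u]` is connected. If range points `y` close to `ψ x` escaped the cone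
`C x`, the closed set `ψ⁻¹ (C x)` would be relatively open in the connected set `ψ⁻¹[ψ x, y]`;
so near `ψ x` the range lies in `C x` and `ψ` is open onto its range. Conversely, a map that is
open onto its range and has connected fibers pulls connected subsets of the range back to
connected sets. -/

open Topology

/-- A local cone structure for a continuous map `ψ : M → E`: an assignment of a
closed subset `C x ⊆ E` to each `x ∈ M` such that (S1) every neighborhood of `x`
contains an open neighborhood `U` of `x` with `ψ '' U ⊆ C x` and `ψ '' U` a
neighborhood of `ψ x` in `C x` (subspace topology), and (S2) `C` is constant on
connected components of fibers of `ψ`. -/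
structure IsLocalConeStructure {M E : Type*} [TopologicalSpace M] [TopologicalSpace E]
    (ψ : M → E) (C : M → Set E) : Prop where
  isClosed : ∀ x : M, IsClosed (C x)
  locally : ∀ x : M, ∀ V ∈ 𝓝 x, ∃ U : Set M, IsOpen U ∧ x ∈ U ∧ U ⊆ V ∧
      ψ '' U ⊆ C x ∧ ψ '' U ∈ 𝓝[C x] (ψ x)
  fiberCompat : ∀ x y : M, y ∈ connectedComponentIn (ψ ⁻¹' {ψ x}) x → C x = C y

open Set Filter

theorem IsPreconnected.preimage_of_isOpenMap_of_isPreconnected_fiber {α β : Type*}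
    [TopologicalSpace α] [TopologicalSpace β] {f : α → β} {s : Set β} (hs : IsPreconnected s)
    (hf : IsOpenMap f) (hfib : ∀ y ∈ s, IsPreconnected (f ⁻¹' {y})) (hsf : s ⊆ range f) :
    IsPreconnected (f ⁻¹' s) := fun u v hu hv hsuv hsu hsv => by
  have himage : f '' (f ⁻¹' s) = s := image_preimage_eq_of_subset hsf
  obtain ⟨y, hys, ⟨a, hau, hay⟩, ⟨b, hbv, hby⟩⟩ : (s ∩ (f '' u ∩ f '' v)).Nonempty := by
    refine hs (f '' u) (f '' v) (hf u hu) (hf v hv) ?_ ?_ ?_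
    · simpa only [himage, image_union] using image_mono (f := f) hsuv
    · simpa only [image_preimage_inter] using hsu.image f
    · simpa only [image_preimage_inter] using hsv.image f
  have hfiber : f ⁻¹' {y} ⊆ f ⁻¹' s := preimage_mono (singleton_subset_iff.2 hys)
  obtain ⟨c, hc, hcuv⟩ := hfib y hys u v hu hv (hfiber.trans hsuv) ⟨a, hay, hau⟩ ⟨b, hby, hbv⟩
  exact ⟨c, hfiber hc, hcuv⟩

theorem IsPreconnected.preimage_of_isOpenMap_rangeFactorization {α β : Type*}
    [TopologicalSpace α] [TopologicalSpace β] {f : α → β} {s : Set β} (hs : IsPreconnected s)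
    (hf : IsOpenMap (rangeFactorization f)) (hfib : ∀ y ∈ s, IsPreconnected (f ⁻¹' {y}))
    (hsf : s ⊆ range f) : IsPreconnected (f ⁻¹' s) := by
  have hs' : IsPreconnected (((↑) : range f → β) ⁻¹' s) := by
    rwa [← IsInducing.subtypeVal.isPreconnected_image, Subtype.image_preimage_coe,
      inter_eq_right.2 hsf]
  refine hs'.preimage_of_isOpenMap_of_isPreconnected_fiber hf (fun y hy => ?_) ?_
  · convert hfib y hy using 1
    ext x
    simp [rangeFactorization, Subtype.ext_iff]
  · rintro ⟨_, x, rfl⟩ -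
    exact ⟨x, rfl⟩

theorem isOpenMap_rangeFactorization_of_nhdsWithin_le {α β : Type*}
    [TopologicalSpace α] [TopologicalSpace β] {f : α → β}
    (h : ∀ x, 𝓝[range f] (f x) ≤ map f (𝓝 x)) : IsOpenMap (rangeFactorization f) := by
  refine IsOpenMap.of_nhds_le fun x => ?_
  have hval : ((↑) : range f → β) ∘ rangeFactorization f = f := rfl
  calc 𝓝 (rangeFactorization f x) = comap (↑) (𝓝[range ((↑) : range f → β)] (f x)) := by
        rw [comap_nhdsWithin_range, nhds_subtype]; rfl
    _ ≤ comap (↑) (map ((↑) : range f → β) (map (rangeFactorization f) (𝓝 x))) := by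
        rw [map_map, hval, Subtype.range_coe]
        exact comap_mono (h x)
    _ = map (rangeFactorization f) (𝓝 x) := comap_map Subtype.val_injective

theorem IsPreconnected.segment_subset {E : Type*} [AddCommGroup E] [Module ℝ E]
    [TopologicalSpace E] [SeparatingDual ℝ E] {S : Set E} {u v : E} (hS : IsPreconnected S)
    (hSuv : S ⊆ segment ℝ u v) (hu : u ∈ S) (hv : v ∈ S) : segment ℝ u v ⊆ S := by
  rcases eq_or_ne u v with rfl | huv
  · simpa [segment_same] using hu
  obtain ⟨g, hg⟩ := SeparatingDual.exists_separating_of_ne (R := ℝ) huv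
  have hg_lineMap : ∀ t : ℝ,
      g (AffineMap.lineMap u v t) = AffineMap.lineMap (g u) (g v) t := fun t =>
    (g : E →ₗ[ℝ] ℝ).toAffineMap.apply_lineMap u v t
  have hgS : uIcc (g u) (g v) ⊆ g '' S :=
    (hS.image g g.continuous.continuousOn).ordConnected.uIcc_subset
      (mem_image_of_mem g hu) (mem_image_of_mem g hv)
  intro w hw
  obtain ⟨s, hsS, hsw⟩ : ∃ s ∈ S, g s = g w := hgS <| by
    rw [← segment_eq_uIcc]
    exact (image_segment ℝ (g : E →ₗ[ℝ] ℝ).toAffineMap u v).subset ⟨w, hw, rfl⟩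
  rw [segment_eq_image_lineMap] at hSuv hw
  obtain ⟨t, -, rfl⟩ := hw
  obtain ⟨t', -, rfl⟩ := hSuv hsS
  rw [hg_lineMap, hg_lineMap] at hsw
  rwa [(AffineMap.lineMap_injective ℝ hg) hsw] at hsS

theorem convex_range_of_isPreconnected_preimage_segment {M E : Type*} [TopologicalSpace M]
    [AddCommGroup E] [Module ℝ E] [TopologicalSpace E] [SeparatingDual ℝ E] {ψ : M → E}
    (hψ : Continuous ψ)
    (hseg : ∀ u ∈ range ψ, ∀ v ∈ range ψ, IsPreconnected (ψ ⁻¹' segment ℝ u v)) :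
    Convex ℝ (range ψ) := by
  refine convex_iff_segment_subset.2 fun u hu v hv => ?_
  have hsub : segment ℝ u v ⊆ ψ '' (ψ ⁻¹' segment ℝ u v) := by
    obtain ⟨a, rfl⟩ := hu
    obtain ⟨b, rfl⟩ := hv
    exact ((hseg _ ⟨a, rfl⟩ _ ⟨b, rfl⟩).image ψ hψ.continuousOn).segment_subset
      (image_preimage_subset ψ _) ⟨a, left_mem_segment ℝ _ _, rfl⟩
      ⟨b, right_mem_segment ℝ _ _, rfl⟩
  exact hsub.trans (image_subset_range ψ _)

namespace IsLocalConeStructure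

variable {M E : Type*} [TopologicalSpace M] [TopologicalSpace E] {ψ : M → E} {C : M → Set E}

theorem map_nhds (hC : IsLocalConeStructure ψ C) {x : M} (hψ : ContinuousAt ψ x) :
    map ψ (𝓝 x) = 𝓝[C x] (ψ x) := by
  refine le_antisymm (tendsto_nhdsWithin_iff.2 ⟨hψ, ?_⟩) fun T hT => ?_
  · obtain ⟨U, hUo, hxU, -, hUC, -⟩ := hC.locally x univ univ_mem
    filter_upwards [hUo.mem_nhds hxU] with y hy using hUC (mem_image_of_mem ψ hy)
  · obtain ⟨U, -, -, hUT, -, hU⟩ := hC.locally x _ hT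
    exact mem_of_superset hU ((image_mono hUT).trans (image_preimage_subset ψ T))

theorem eq_of_apply_eq (hC : IsLocalConeStructure ψ C) {x y : M}
    (hfib : IsPreconnected (ψ ⁻¹' {ψ x})) (h : ψ x = ψ y) : C x = C y :=
  hC.fiberCompat x y (hfib.subset_connectedComponentIn rfl subset_rfl h.symm)

theorem isOpen_preimage_image (hC : IsLocalConeStructure ψ C) (hψ : Continuous ψ)
    (hfib : ∀ u, IsPreconnected (ψ ⁻¹' {u})) {U : Set M} (hU : IsOpen U) :
    IsOpen (ψ ⁻¹' (ψ '' U)) := by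
  refine isOpen_iff_mem_nhds.2 fun y ⟨x, hxU, hxy⟩ => ?_
  rw [← mem_map, hC.map_nhds hψ.continuousAt, ← hxy, hC.eq_of_apply_eq (hfib _) hxy.symm,
    ← hC.map_nhds hψ.continuousAt]
  exact image_mem_map (hU.mem_nhds hxU)

theorem mem_nhdsWithin_range [AddCommGroup E] [Module ℝ E] [LocallyConvexSpace ℝ E]
    (hC : IsLocalConeStructure ψ C) (hψ : Continuous ψ) (hfib : ∀ u, IsPreconnected (ψ ⁻¹' {u}))
    {x : M} (hseg : ∀ y ∈ range ψ, IsPreconnected (ψ ⁻¹' segment ℝ (ψ x) y)) :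
    C x ∈ 𝓝[range ψ] (ψ x) := by
  obtain ⟨U, hUo, hxU, -, hUC, hU⟩ := hC.locally x univ univ_mem
  obtain ⟨T, hT, hTU⟩ := mem_nhdsWithin_iff_exists_mem_nhds_inter.1 hU
  obtain ⟨W, ⟨hW, hWconv⟩, hWT⟩ := (LocallyConvexSpace.convex_basis (𝕜 := ℝ) (ψ x)).mem_iff.1 hT
  refine mem_nhdsWithin_iff_exists_mem_nhds_inter.2 ⟨W, hW, ?_⟩
  rintro _ ⟨hyW, y, rfl⟩
  have hsegW : segment ℝ (ψ x) (ψ y) ⊆ W := hWconv.segment_subset (mem_of_mem_nhds hW) hyW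
  have hsat : IsOpen (ψ ⁻¹' (ψ '' U)) := hC.isOpen_preimage_image hψ hfib hUo
  -- the open set `ψ⁻¹ (ψ '' U)` and the closed set `ψ⁻¹ (C x)` agree on `ψ⁻¹[ψ x, ψ y]`
  have hcover : ψ ⁻¹' segment ℝ (ψ x) (ψ y) ⊆ ψ ⁻¹' (ψ '' U) ∪ (ψ ⁻¹' C x)ᶜ := by
    intro q hq
    by_cases hqC : ψ q ∈ C x
    · exact Or.inl (hTU ⟨hWT (hsegW hq), hqC⟩)
    · exact Or.inr hqC
  have hdisj : Disjoint (ψ ⁻¹' (ψ '' U)) (ψ ⁻¹' C x)ᶜ :=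
    disjoint_compl_right.mono_left (preimage_mono hUC)
  have hsegU := (hseg _ ⟨y, rfl⟩).subset_left_of_subset_union hsat
    ((hC.isClosed x).preimage hψ).isOpen_compl hdisj hcover
    ⟨x, left_mem_segment ℝ _ _, mem_image_of_mem ψ hxU⟩
  exact hUC (hsegU (right_mem_segment ℝ _ _))

end IsLocalConeStructure

theorem stmt12_general {M E : Type*} [TopologicalSpace M]
    [NormedAddCommGroup E] [NormedSpace ℝ E]
    (ψ : M → E) (C : M → Set E)
    (hcont : Continuous ψ) (hC : IsLocalConeStructure ψ C) :
    (∀ u ∈ Set.range ψ, ∀ v ∈ Set.range ψ,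
        IsConnected (ψ ⁻¹' segment ℝ u v)) ↔
      (Convex ℝ (Set.range ψ) ∧
        (∀ u : E, IsPreconnected (ψ ⁻¹' {u})) ∧
        IsOpenMap (Set.rangeFactorization ψ)) := by
  constructor
  · intro hconn
    have hseg u hu v hv := (hconn u hu v hv).isPreconnected
    have hfib (u : E) : IsPreconnected (ψ ⁻¹' {u}) := by
      by_cases hu : u ∈ range ψ
      · simpa only [segment_same] using hseg u hu u hu
      · rw [preimage_singleton_eq_empty.2 hu]
        exact isPreconnected_empty
    refine ⟨convex_range_of_isPreconnected_preimage_segment hcont hseg, hfib,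
      isOpenMap_rangeFactorization_of_nhdsWithin_le fun x => ?_⟩
    rw [hC.map_nhds hcont.continuousAt]
    exact nhdsWithin_le_of_mem (hC.mem_nhdsWithin_range hcont hfib (hseg _ ⟨x, rfl⟩))
  · rintro ⟨hconv, hfib, hopen⟩ u ⟨a, rfl⟩ v hv
    refine ⟨⟨a, left_mem_segment ℝ _ _⟩, ?_⟩
    exact (convex_segment _ _).isPreconnected.preimage_of_isOpenMap_rangeFactorization hopen
      (fun y _ => hfib y) (hconv.segment_subset ⟨a, rfl⟩ hv)

/-- Let `ψ : M → E` be a continuous map into a finite-dimensional real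
normed vector space admitting a local cone structure. Then `ψ` is convex if and only
if its range is convex, its fibers are preconnected, and its corestriction onto its
range is open. -/
theorem stmt12 {M E : Type*} [TopologicalSpace M]
    [NormedAddCommGroup E] [NormedSpace ℝ E] [FiniteDimensional ℝ E]
    (ψ : M → E) (C : M → Set E)
    (hcont : Continuous ψ) (hC : IsLocalConeStructure ψ C) :
    (∀ u ∈ Set.range ψ, ∀ v ∈ Set.range ψ,
        IsConnected (ψ ⁻¹' segment ℝ u v)) ↔
      (Convex ℝ (Set.range ψ) ∧
        (∀ u : E, IsPreconnected (ψ ⁻¹' {u})) ∧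
        IsOpenMap (Set.rangeFactorization ψ)) :=
  stmt12_general ψ C hcont hC
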